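/- Let Y ∼ (1/2)N(−θ*,1) + (1/2)N(θ*,1) and f(θ) = E[Y·tanh(θY)]. Then f(0) = 0, f'(0) = 1 + θ*², f''(0) = 0, and f'(θ*) ≤ exp(−θ*²/2). -/

import Mathlib

/-! Differentiating under the integral sign (the integrands are dominated by moments of the
mixture because `tanh` and `tanh' = 1 - tanh²` are bounded) gives
`f'(θ) = E[Y² (1 - tanh² (θY))]`, hence `f'(0) = E[Y²] = 1 + s²` and, differentiating once more,
`f''(0) = -2 E[Y³ tanh 0 (1 - tanh² 0)] = 0`. For the bound at `θ = s`, the mixture is the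
standard Gaussian reweighted by `exp (-s²/2) cosh (s y)`, so with `Z ∼ N(0,1)`
`f'(s) = exp (-s²/2) E[Z² / cosh (s Z)] ≤ exp (-s²/2) E[Z²] = exp (-s²/2)`. -/

open MeasureTheory ProbabilityTheory
open scoped ENNReal

/-- The symmetric two-component Gaussian mixture `(1/2)N(−s,1) + (1/2)N(s,1)`. -/
noncomputable def mixG (s : ℝ) : Measure ℝ :=
  (1 / 2 : ℝ≥0∞) • gaussianReal (-s) 1 + (1 / 2 : ℝ≥0∞) • gaussianReal s 1

/-- The population EM map `f(θ) = E[Y·tanh(θY)]`, `Y ∼ mixG s`. -/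
noncomputable def emMap (s θ : ℝ) : ℝ := ∫ y, y * Real.tanh (θ * y) ∂(mixG s)

open Real

namespace Real

theorem one_sub_tanh_sq (x : ℝ) : 1 - tanh x ^ 2 = (cosh x ^ 2)⁻¹ := by
  have := cosh_pos x
  rw [tanh_eq_sinh_div_cosh]
  field_simp
  linarith [cosh_sq_sub_sinh_sq x]

theorem hasDerivAt_tanh (x : ℝ) : HasDerivAt tanh (1 - tanh x ^ 2) x := by
  have h := (hasDerivAt_sinh x).div (hasDerivAt_cosh x) (cosh_pos x).ne'
  rw [← pow_two, ← pow_two, cosh_sq_sub_sinh_sq, one_div, ← one_sub_tanh_sq] at h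
  exact h.congr_of_eventuallyEq (.of_forall tanh_eq_sinh_div_cosh)

@[fun_prop]
theorem continuous_tanh : Continuous tanh :=
  continuous_iff_continuousAt.2 fun x => (hasDerivAt_tanh x).continuousAt

theorem abs_one_sub_tanh_sq_le_one (x : ℝ) : |1 - tanh x ^ 2| ≤ 1 := by
  rw [abs_le]
  constructor <;> nlinarith [tanh_sq_lt_one x, sq_nonneg (tanh x)]

theorem cosh_mul_one_sub_tanh_sq_le_one (x : ℝ) : cosh x * (1 - tanh x ^ 2) ≤ 1 := by
  rw [one_sub_tanh_sq, pow_two, mul_inv, ← mul_assoc, mul_inv_cancel₀ (cosh_pos x).ne', one_mul]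
  exact inv_le_one_of_one_le₀ (one_le_cosh x)

end Real

theorem hasDerivAt_integral_mul_comp_mul {μ : Measure ℝ} {w φ φ' : ℝ → ℝ} {C θ₀ : ℝ}
    (hw : AEStronglyMeasurable w μ) (hφ : ∀ x, HasDerivAt φ (φ' x) x) (hφ' : ∀ x, |φ' x| ≤ C)
    (hint : Integrable (fun y => w y * φ (θ₀ * y)) μ) (hint' : Integrable (fun y => w y * y) μ) :
    HasDerivAt (fun θ => ∫ y, w y * φ (θ * y) ∂μ) (∫ y, w y * y * φ' (θ₀ * y) ∂μ) θ₀ := by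
  have hφ_cont : Continuous φ := continuous_iff_continuousAt.2 fun x => (hφ x).continuousAt
  have hφ'_meas : Measurable φ' := by
    rw [show φ' = deriv φ from funext fun x => (hφ x).deriv.symm]
    exact measurable_deriv φ
  refine (hasDerivAt_integral_of_dominated_loc_of_deriv_le (bound := fun y => C * |w y * y|)
    (F := fun θ y => w y * φ (θ * y)) (F' := fun θ y => w y * y * φ' (θ * y))
    Filter.univ_mem (.of_forall fun θ => hw.mul (by fun_prop)) hint
    ((hw.mul aestronglyMeasurable_id).mul
      (hφ'_meas.comp (measurable_const_mul θ₀)).aestronglyMeasurable)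
    (ae_of_all _ fun y θ _ => ?_) (hint'.abs.const_mul C)
    (ae_of_all _ fun y θ _ => ?_)).2
  · rw [Real.norm_eq_abs, abs_mul, mul_comm]
    exact mul_le_mul_of_nonneg_right (hφ' _) (abs_nonneg _)
  · exact (((hφ (θ * y)).comp θ (hasDerivAt_mul_const y)).const_mul (w y)).congr_deriv
      (by ring)

theorem integrable_pow_gaussianReal (m : ℝ) (v : NNReal) (n : ℕ) :
    Integrable (fun y => y ^ n) (gaussianReal m v) :=
  (memLp_id_gaussianReal n).integrable_norm_pow'.mono' (by fun_prop)
    (ae_of_all _ fun y => by simp)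

theorem integrable_mul_self_gaussianReal (m : ℝ) (v : NNReal) :
    Integrable (fun y => y * y) (gaussianReal m v) := by
  simpa only [pow_two] using integrable_pow_gaussianReal m v 2

theorem integral_mul_self_gaussianReal (m : ℝ) (v : NNReal) :
    ∫ y, y * y ∂gaussianReal m v = v + m ^ 2 := by
  have := variance_eq_sub (memLp_id_gaussianReal (μ := m) (v := v) 2)
  simp only [variance_id_gaussianReal, Pi.pow_apply, id, integral_id_gaussianReal] at this
  simp only [← pow_two]
  linarith

theorem integrable_mixG {s : ℝ} {g : ℝ → ℝ} (hg : ∀ m, Integrable g (gaussianReal m 1)) :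
    Integrable g (mixG s) :=
  ((hg (-s)).smul_measure (by simp)).add_measure ((hg s).smul_measure (by simp))

theorem integral_mixG {s : ℝ} {g : ℝ → ℝ} (hg : ∀ m, Integrable g (gaussianReal m 1)) :
    ∫ y, g y ∂mixG s = (∫ y, g y ∂gaussianReal (-s) 1 + ∫ y, g y ∂gaussianReal s 1) / 2 := by
  rw [mixG, integral_add_measure ((hg (-s)).smul_measure (by simp))
    ((hg s).smul_measure (by simp)), integral_smul_measure, integral_smul_measure]
  norm_num
  ring

theorem integrable_pow_mixG (s : ℝ) (n : ℕ) : Integrable (fun y => y ^ n) (mixG s) :=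
  integrable_mixG fun m => integrable_pow_gaussianReal m 1 n

theorem integral_mul_self_mixG (s : ℝ) : ∫ y, y * y ∂mixG s = 1 + s ^ 2 := by
  rw [integral_mixG fun m => integrable_mul_self_gaussianReal m 1,
    integral_mul_self_gaussianReal, integral_mul_self_gaussianReal]
  push_cast
  ring

theorem gaussianPDFReal_neg_add_gaussianPDFReal (s x : ℝ) :
    (gaussianPDFReal (-s) 1 x + gaussianPDFReal s 1 x) / 2 =
      gaussianPDFReal 0 1 x * (exp (-s ^ 2 / 2) * cosh (s * x)) := by
  simp only [gaussianPDFReal, NNReal.coe_one, mul_one, cosh_eq, sub_zero]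
  ring_nf
  simp only [exp_add]
  ring

theorem mixG_eq_withDensity (s : ℝ) :
    mixG s = (gaussianReal 0 1).withDensity
      fun y => ENNReal.ofReal (exp (-s ^ 2 / 2) * cosh (s * y)) := by
  rw [mixG, gaussianReal_of_var_ne_zero _ one_ne_zero, gaussianReal_of_var_ne_zero _ one_ne_zero,
    gaussianReal_of_var_ne_zero _ one_ne_zero, ← withDensity_mul _ (by fun_prop) (by fun_prop),
    ← withDensity_smul _ (by fun_prop), ← withDensity_smul _ (by fun_prop),
    ← withDensity_add_left (by fun_prop)]
  congr 1
  funext x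
  simp only [Pi.add_apply, Pi.smul_apply, Pi.mul_apply, smul_eq_mul, gaussianPDF]
  rw [← ENNReal.ofReal_mul (gaussianPDFReal_nonneg _ _ _),
    ← gaussianPDFReal_neg_add_gaussianPDFReal, ENNReal.ofReal_div_of_pos two_pos,
    ENNReal.ofReal_add (gaussianPDFReal_nonneg _ _ _) (gaussianPDFReal_nonneg _ _ _),
    ENNReal.ofReal_ofNat]
  simp only [ENNReal.div_eq_inv_mul, mul_add, mul_one]

theorem integral_mixG_eq_integral_gaussianReal (s : ℝ) (g : ℝ → ℝ) :
    ∫ y, g y ∂mixG s = ∫ y, exp (-s ^ 2 / 2) * cosh (s * y) * g y ∂gaussianReal 0 1 := by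
  rw [mixG_eq_withDensity, integral_withDensity_eq_integral_toReal_smul (by fun_prop)
    (ae_of_all _ fun _ => ENNReal.ofReal_lt_top)]
  congr with y
  rw [smul_eq_mul, ENNReal.toReal_ofReal (mul_pos (exp_pos _) (cosh_pos _)).le]

theorem hasDerivAt_emMap (s θ : ℝ) :
    HasDerivAt (emMap s) (∫ y, y * y * (1 - tanh (θ * y) ^ 2) ∂mixG s) θ :=
  hasDerivAt_integral_mul_comp_mul (w := fun y => y) aestronglyMeasurable_id hasDerivAt_tanh
    abs_one_sub_tanh_sq_le_one
    ((integrable_pow_mixG s 1).norm.mono' (by fun_prop) (ae_of_all _ fun y => by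
      simpa [abs_mul] using mul_le_of_le_one_right (abs_nonneg y) (abs_tanh_lt_one (θ * y)).le))
    (by simpa only [pow_two] using integrable_pow_mixG s 2)

theorem deriv_emMap (s : ℝ) :
    deriv (emMap s) = fun θ => ∫ y, y * y * (1 - tanh (θ * y) ^ 2) ∂mixG s :=
  funext fun θ => (hasDerivAt_emMap s θ).deriv

theorem hasDerivAt_deriv_emMap_zero (s : ℝ) : HasDerivAt (deriv (emMap s)) 0 0 := by
  have h := hasDerivAt_integral_mul_comp_mul (μ := mixG s) (w := fun y => y * y) (θ₀ := 0)
    (φ := fun x => 1 - tanh x ^ 2) (C := 2) (by fun_prop)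
    (fun x => ((hasDerivAt_tanh x).pow 2).const_sub 1)
    (fun x => by
      norm_num [abs_mul]
      nlinarith [abs_one_sub_tanh_sq_le_one x, (abs_tanh_lt_one x).le, abs_nonneg (tanh x),
        abs_nonneg (1 - tanh x ^ 2)])
    (by simpa [← pow_two] using integrable_pow_mixG s 2)
    (by simpa only [pow_succ, pow_zero, one_mul] using integrable_pow_mixG s 3)
  rw [deriv_emMap]
  simpa using h

theorem deriv_emMap_self_le (s : ℝ) : deriv (emMap s) s ≤ exp (-s ^ 2 / 2) := by
  rw [(hasDerivAt_emMap s s).deriv, integral_mixG_eq_integral_gaussianReal]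
  calc ∫ y, exp (-s ^ 2 / 2) * cosh (s * y) * (y * y * (1 - tanh (s * y) ^ 2)) ∂gaussianReal 0 1
      ≤ ∫ y, exp (-s ^ 2 / 2) * (y * y) ∂gaussianReal 0 1 := by
        refine integral_mono_of_nonneg (ae_of_all _ fun y => ?_)
          ((integrable_mul_self_gaussianReal 0 1).const_mul _) (ae_of_all _ fun y => ?_)
        · simp only [Pi.zero_apply, one_sub_tanh_sq]
          have := cosh_pos (s * y)
          have := mul_self_nonneg y
          positivity
        · calc exp (-s ^ 2 / 2) * cosh (s * y) * (y * y * (1 - tanh (s * y) ^ 2))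
              = exp (-s ^ 2 / 2) * (y * y) * (cosh (s * y) * (1 - tanh (s * y) ^ 2)) := by ring
            _ ≤ exp (-s ^ 2 / 2) * (y * y) :=
              mul_le_of_le_one_right (mul_nonneg (exp_pos _).le (mul_self_nonneg y))
                (cosh_mul_one_sub_tanh_sq_le_one _)
    _ = exp (-s ^ 2 / 2) := by simp [integral_const_mul, integral_mul_self_gaussianReal]

theorem stmt_5_general (s : ℝ) :
    emMap s 0 = 0 ∧
    deriv (emMap s) 0 = 1 + s ^ 2 ∧
    deriv (deriv (emMap s)) 0 = 0 ∧
    deriv (emMap s) s ≤ Real.exp (-s ^ 2 / 2) := by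
  refine ⟨by simp [emMap], ?_, (hasDerivAt_deriv_emMap_zero s).deriv, deriv_emMap_self_le s⟩
  simp [deriv_emMap, integral_mul_self_mixG]

/-- `f(0) = 0`, `f'(0) = 1 + s²`, `f''(0) = 0`, and `f'(s) ≤ exp(−s²/2)`. -/
theorem stmt_5 (s : ℝ) (hs : 0 ≤ s) :
    emMap s 0 = 0 ∧
    deriv (emMap s) 0 = 1 + s ^ 2 ∧
    deriv (deriv (emMap s)) 0 = 0 ∧
    deriv (emMap s) s ≤ Real.exp (-s ^ 2 / 2) :=
  stmt_5_general s
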